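/- Fix u̲ = 0 and v̲ = 0 so R^s = 1/2 and R^m = 1/4. Then R^m < R^s; more generally, for all u̲, v̲ ∈ [0,1], min_{p∈[0,1]} max{(1−p)v, γ(u,p)(1−v)} ≤ min{1−v, (1−u̲)v} for every (u,v) ∈ [u̲,1]×[v̲,1], where γ(u,p) = min{q ∈ [0,1]: u̲ + q(u−u̲) ≥ pu}; consequently R^m ≤ R^s where R^m = max_{(u,v)} min_p max{(1−p)v, γ(u,p)(1−v)} and R^s = max_{v∈[v̲,1]} min{1−v, (1−u̲)v}. -/
import Mathlib


/-- γ(u,p) = min{q ∈ [0,1] : u̲ + q(u − u̲) ≥ p·u}. -/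
noncomputable def gammaFn (ul u p : ℝ) : ℝ :=
  sInf {q : ℝ | q ∈ Set.Icc (0:ℝ) 1 ∧ p * u ≤ ul + q * (u - ul)}

/-- Inner minimum min_{p∈[0,1]} max{(1−p)v, γ(u,p)(1−v)}. -/
noncomputable def innerMin (ul u v : ℝ) : ℝ :=
  sInf {y : ℝ | ∃ p ∈ Set.Icc (0:ℝ) 1, y = max ((1 - p) * v) (gammaFn ul u p * (1 - v))}

/-- R^m = max_{(u,v)} innerMin. -/
noncomputable def RmVal (ul vl : ℝ) : ℝ :=
  sSup {x : ℝ | ∃ u ∈ Set.Icc ul 1, ∃ v ∈ Set.Icc vl 1, x = innerMin ul u v}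

/-- R^s = max_{v∈[v̲,1]} min{1−v, (1−u̲)v}. -/
noncomputable def RsVal (ul vl : ℝ) : ℝ :=
  sSup {x : ℝ | ∃ v ∈ Set.Icc vl 1, x = min (1 - v) ((1 - ul) * v)}

lemma gammaFn_nonneg (ul u p : ℝ) : 0 ≤ gammaFn ul u p :=
  Real.sInf_nonneg (fun q hq => hq.1.1)

lemma gammaFn_bddBelow (ul u p : ℝ) :
    BddBelow {q : ℝ | q ∈ Set.Icc (0:ℝ) 1 ∧ p * u ≤ ul + q * (u - ul)} :=
  ⟨0, fun q hq => hq.1.1⟩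

lemma gammaFn_le_of_mem (ul u p q : ℝ) (h0 : 0 ≤ q) (h1 : q ≤ 1)
    (h : p * u ≤ ul + q * (u - ul)) : gammaFn ul u p ≤ q :=
  csInf_le (gammaFn_bddBelow ul u p) ⟨⟨h0, h1⟩, h⟩

lemma gammaFn_eq_zero (ul u p : ℝ) (h : p * u ≤ ul) : gammaFn ul u p = 0 := by
  refine le_antisymm (gammaFn_le_of_mem ul u p 0 le_rfl zero_le_one (by linarith))
    (gammaFn_nonneg ul u p)

lemma innerMin_bddBelow (ul u v : ℝ) (hv0 : 0 ≤ v) :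
    BddBelow {y : ℝ | ∃ p ∈ Set.Icc (0:ℝ) 1, y = max ((1 - p) * v) (gammaFn ul u p * (1 - v))} := by
  refine ⟨0, fun y hy => ?_⟩
  obtain ⟨p, hp, rfl⟩ := hy
  have : (0:ℝ) ≤ (1 - p) * v := mul_nonneg (by linarith [hp.2]) hv0
  exact le_trans this (le_max_left _ _)

lemma innerMin_le (ul u v p : ℝ) (hv0 : 0 ≤ v) (hp : p ∈ Set.Icc (0:ℝ) 1) :
    innerMin ul u v ≤ max ((1 - p) * v) (gammaFn ul u p * (1 - v)) :=
  csInf_le (innerMin_bddBelow ul u v hv0) ⟨p, hp, rfl⟩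

/-- The pointwise inequality. -/
lemma pointwise (ul vl u v : ℝ) (hul : ul ∈ Set.Icc (0:ℝ) 1) (hvl : vl ∈ Set.Icc (0:ℝ) 1)
    (hu : u ∈ Set.Icc ul 1) (hv : v ∈ Set.Icc vl 1) :
    innerMin ul u v ≤ min (1 - v) ((1 - ul) * v) := by
  have hv0 : 0 ≤ v := le_trans hvl.1 hv.1
  have hv1 : v ≤ 1 := hv.2
  have hul0 : 0 ≤ ul := hul.1
  have hulu : ul ≤ u := hu.1
  have hu1 : u ≤ 1 := hu.2
  refine le_min ?_ ?_
  · -- p = 1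
    have h1 := innerMin_le ul u v 1 hv0 ⟨zero_le_one, le_rfl⟩
    have hg1 : gammaFn ul u 1 ≤ 1 :=
      gammaFn_le_of_mem ul u 1 1 zero_le_one le_rfl (by linarith)
    have hg0 := gammaFn_nonneg ul u 1
    have : max ((1 - 1) * v) (gammaFn ul u 1 * (1 - v)) ≤ 1 - v := by
      apply max_le
      · nlinarith
      · nlinarith
    linarith
  · -- p = ul/u or p = 0
    rcases eq_or_lt_of_le (le_trans hul0 hulu) with h0 | hupos
    · -- u = 0, hence ul = 0
      have hu0 : u = 0 := h0.symm
      have hul0' : ul = 0 := le_antisymm (hu0 ▸ hulu) hul0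
      have h2 := innerMin_le ul u v 0 hv0 ⟨le_rfl, zero_le_one⟩
      have hg : gammaFn ul u 0 = 0 := gammaFn_eq_zero ul u 0 (by rw [hu0, hul0']; norm_num)
      rw [hg] at h2
      have : max ((1 - 0) * v) (0 * (1 - v)) ≤ (1 - ul) * v := by
        rw [hul0']
        apply max_le <;> nlinarith
      linarith
    · -- u > 0
      set p := ul / u with hp
      have hp0 : 0 ≤ p := div_nonneg hul0 (le_of_lt hupos)
      have hp1 : p ≤ 1 := (div_le_one hupos).mpr hulu
      have hpu : p * u = ul := div_mul_cancel₀ ul (ne_of_gt hupos)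
      have h2 := innerMin_le ul u v p hv0 ⟨hp0, hp1⟩
      have hg : gammaFn ul u p = 0 := gammaFn_eq_zero ul u p (by rw [hpu])
      rw [hg] at h2
      have hple : ul ≤ p := by
        rw [hp, le_div_iff₀ hupos]; nlinarith
      have : max ((1 - p) * v) (0 * (1 - v)) ≤ (1 - ul) * v := by
        apply max_le
        · nlinarith
        · nlinarith
      linarith

/-- R^m(0,0) = 1/4 < 1/2 = R^s(0,0); pointwise,
innerMin(u,v) ≤ min{1−v,(1−u̲)v}; consequently R^m ≤ R^s. -/
theorem stmt17 :
    RmVal 0 0 < RsVal 0 0 ∧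
    (∀ ul ∈ Set.Icc (0:ℝ) 1, ∀ vl ∈ Set.Icc (0:ℝ) 1,
      ∀ u ∈ Set.Icc ul 1, ∀ v ∈ Set.Icc vl 1,
        innerMin ul u v ≤ min (1 - v) ((1 - ul) * v)) ∧
    (∀ ul ∈ Set.Icc (0:ℝ) 1, ∀ vl ∈ Set.Icc (0:ℝ) 1, RmVal ul vl ≤ RsVal ul vl) := by
  have hRsBdd : ∀ ul vl : ℝ, 0 ≤ vl →
      BddAbove {x : ℝ | ∃ v ∈ Set.Icc vl 1, x = min (1 - v) ((1 - ul) * v)} := by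
    intro ul vl hvl
    refine ⟨1, fun x hx => ?_⟩
    obtain ⟨v, hv, rfl⟩ := hx
    have : 0 ≤ v := le_trans hvl hv.1
    exact le_trans (min_le_left _ _) (by linarith)
  refine ⟨?_, fun ul hul vl hvl u hu v hv => pointwise ul vl u v hul hvl hu hv, ?_⟩
  · -- RmVal 0 0 ≤ 1/4 < 1/2 ≤ RsVal 0 0
    have hRm : RmVal 0 0 ≤ 1/4 := by
      apply csSup_le
      · exact ⟨innerMin 0 1 1, 1, ⟨zero_le_one, le_rfl⟩, 1, ⟨zero_le_one, le_rfl⟩, rfl⟩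
      · rintro x ⟨u, hu, v, hv, rfl⟩
        have hv0 : 0 ≤ v := hv.1
        have hv1 : v ≤ 1 := hv.2
        have h := innerMin_le 0 u v v hv0 ⟨hv0, hv1⟩
        have hg : gammaFn 0 u v ≤ v :=
          gammaFn_le_of_mem 0 u v v hv0 hv1 (by linarith)
        have hg0 := gammaFn_nonneg 0 u v
        have : max ((1 - v) * v) (gammaFn 0 u v * (1 - v)) ≤ 1/4 := by
          apply max_le
          · nlinarith [sq_nonneg (v - 1/2)]
          · nlinarith [sq_nonneg (v - 1/2)]
        linarith
    have hRs : (1/2 : ℝ) ≤ RsVal 0 0 := by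
      apply le_csSup (hRsBdd 0 0 le_rfl)
      exact ⟨1/2, ⟨by norm_num, by norm_num⟩, by norm_num⟩
    linarith
  · intro ul hul vl hvl
    apply csSup_le
    · exact ⟨innerMin ul 1 1, 1, ⟨hul.2, le_rfl⟩, 1, ⟨hvl.2, le_rfl⟩, rfl⟩
    · rintro x ⟨u, hu, v, hv, rfl⟩
      have h1 := pointwise ul vl u v hul hvl hu hv
      have h2 : min (1 - v) ((1 - ul) * v) ≤ RsVal ul vl :=
        le_csSup (hRsBdd ul vl hvl.1) ⟨v, hv, rfl⟩
      linarith
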